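/- arXiv:2402.05220 — 5 statements merged into one kernel-verified Lean document; each statement's English description precedes it below -/
import Mathlib

section
/- Consider the system of polynomial equations indexed by β = 1, 2, ..., r: for each β, the sum over l = 1,...,m and over pairs (n₁,n₂) ∈ ℕ² with n₁ + 2n₂ = β of s_l² · t₁ₗ^{n₁} · t₂ₗ^{n₂} / (n₁! · n₂!) equals 0, in unknowns (s_l, t₁ₗ, t₂ₗ)_{l=1}^{m} ⊆ ℝ³. For m = 2 and r = 4, this system admits no non-trivial solution, where a solution is non-trivial if all s_l are nonzero and at least one t₁ₗ is nonzero. -/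
open Finset

/-- The system of polynomial equations~(4) from the paper: for each `β = 1,…,r`,
`Σ_{l=1}^m Σ_{n₁+2n₂=β} s_l² t₁ₗ^{n₁} t₂ₗ^{n₂} / (n₁! n₂!) = 0`. -/
def polySystem (m r : ℕ) (s t₁ t₂ : Fin m → ℝ) : Prop :=
  ∀ β ∈ Finset.Icc 1 r,
    ∑ l : Fin m,
      ∑ n ∈ (Finset.range (β + 1) ×ˢ Finset.range (β + 1)).filter
          (fun n : ℕ × ℕ => n.1 + 2 * n.2 = β),
        s l ^ 2 * t₁ l ^ n.1 * t₂ l ^ n.2 / (Nat.factorial n.1 * Nat.factorial n.2) = 0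

/-- A solution is non-trivial if all `s_l` are nonzero and some `t₁ₗ` is nonzero. -/
def nontrivialSol (m : ℕ) (s t₁ : Fin m → ℝ) : Prop :=
  (∀ l, s l ≠ 0) ∧ (∃ l, t₁ l ≠ 0)

/-- Key algebraic lemma: the system of four equations for `m = 2` in explicit form,
with `a = s₁² > 0`, `b = s₂² > 0` and `x ≠ 0`, is contradictory. -/
lemma no_sol_key (a b x y u v : ℝ) (ha : 0 < a) (hb : 0 < b) (hx : x ≠ 0)
    (h1 : a*x + b*y = 0)
    (h2 : a*u + a*x^2/2 + (b*v + b*y^2/2) = 0)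
    (h3 : a*x*u + a*x^3/6 + (b*y*v + b*y^3/6) = 0)
    (h4 : a*u^2/2 + a*x^2*u/2 + a*x^4/24 + (b*v^2/2 + b*y^2*v/2 + b*y^4/24) = 0) :
    False := by
  have hb' : b ≠ 0 := hb.ne'
  have hy : y = -(a*x)/b := by field_simp; linarith
  subst hy
  have hv : v = (-(a*u) - a*x^2/2 - b*((-(a*x)/b)^2)/2)/b := by
    field_simp at h2 ⊢
    linarith
  subst hv
  field_simp at h3 h4
  have E3b : (b^5*(a*x*(a+b))) * (3*b*(u+x^2/2) - x^2*(b-a)) = 0 := by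
    linear_combination (b^5/4) * h3
  have E4b : (b^12*(a*(a+b))) * (6*b^2*(u+x^2/2)^2 - x^4*(a^2-a*b+b^2)) = 0 := by
    linear_combination (b^12/16) * h4
  have hfac3 : (b^5*(a*x*(a+b))) ≠ 0 := by
    apply mul_ne_zero (by positivity)
    apply mul_ne_zero (mul_ne_zero ha.ne' hx) (by positivity)
  have hfac4 : (b^12*(a*(a+b))) ≠ 0 := by positivity
  have hP : 3*b*(u+x^2/2) = x^2*(b-a) := by
    rcases mul_eq_zero.mp E3b with h | h
    · exact absurd h hfac3
    · linarith
  have hE4 : 6*b^2*(u+x^2/2)^2 = x^4*(a^2-a*b+b^2) := by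
    rcases mul_eq_zero.mp E4b with h | h
    · exact absurd h hfac4
    · linarith
  have hz : x^4*(a^2+a*b+b^2) = 0 := by
    linear_combination (-3)*hE4 + (2*(3*b*(u+x^2/2)+x^2*(b-a)))*hP
  have hx4 : 0 < x^4 := by positivity
  nlinarith [mul_pos hx4 (mul_pos ha hb), mul_pos hx4 (mul_pos ha ha),
    mul_pos hx4 (mul_pos hb hb)]

/-- For `m = 2`, `r = 4`, the system admits no non-trivial solution, i.e. `r̄(2) ≤ 4`. -/
theorem no_nontrivial_solution_m2_r4 :
    ¬ ∃ s t₁ t₂ : Fin 2 → ℝ, nontrivialSol 2 s t₁ ∧ polySystem 2 4 s t₁ t₂ := by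
  rintro ⟨s, t₁, t₂, ⟨hs, l, htl⟩, hsys⟩
  unfold polySystem at hsys
  have h1 := hsys 1 (by decide)
  have h2 := hsys 2 (by decide)
  have h3 := hsys 3 (by decide)
  have h4 := hsys 4 (by decide)
  norm_num [Fin.sum_univ_two, Finset.sum_product, Finset.sum_filter,
    Finset.sum_range_succ, Nat.factorial] at h1 h2 h3 h4
  have ha : 0 < s 0 ^ 2 := by have := hs 0; positivity
  have hb : 0 < s 1 ^ 2 := by have := hs 1; positivity
  -- the nonzero `t₁` coordinate: at least one of `t₁ 0`, `t₁ 1` is nonzero,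
  -- and by the first equation each is nonzero iff the other is.
  have hx : t₁ 0 ≠ 0 := by
    intro hx0
    have hy0 : t₁ 1 = 0 := by
      have : s 1 ^ 2 * t₁ 1 = 0 := by rw [hx0] at h1; linarith
      rcases mul_eq_zero.mp this with h | h
      · exact absurd h hb.ne'
      · exact h
    fin_cases l <;> simp_all
  exact no_sol_key (s 0 ^ 2) (s 1 ^ 2) (t₁ 0) (t₁ 1) (t₂ 0) (t₂ 1) ha hb hx
    (by linarith) (by linarith) (by linarith) (by linarith)
end

section
/- Consider the system of polynomial equations: for each β = 1,...,r, Σ_{l=1}^{m} Σ_{n₁+2n₂=β} s_l²·t₁ₗ^{n₁}·t₂ₗ^{n₂}/(n₁!n₂!) = 0. For m = 2 and r = 3, this system admits a non-trivial solution (all s_l ≠ 0 and some t₁ₗ ≠ 0). -/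
open Finset

/-- For `m = 2`, `r = 3`, the system admits a non-trivial solution, i.e. `r̄(2) > 3`. -/
theorem exists_nontrivial_solution_m2_r3 :
    ∃ s t₁ t₂ : Fin 2 → ℝ, nontrivialSol 2 s t₁ ∧ polySystem 2 3 s t₁ t₂ := by
  refine ⟨![1, 1], ![1, -1], ![-1/2, -1/2], ⟨?_, ⟨0, by norm_num⟩⟩, ?_⟩
  · intro l; fin_cases l <;> norm_num
  · intro β hβ
    obtain ⟨h1, h2⟩ := Finset.mem_Icc.mp hβ
    interval_cases β <;>
      simp [Finset.sum_filter, Finset.sum_product, Finset.sum_range_succ,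
        Fin.sum_univ_two, Nat.factorial] <;> norm_num
end

section
/- Let f(y|μ,σ) denote the univariate Gaussian density with mean μ and variance σ. If (μ₁,σ₁), ..., (μ_N,σ_N) are pairwise distinct pairs in ℝ × ℝ₊, then the functions y ↦ f(y|μ_j,σ_j), j = 1,...,N, are linearly independent over ℝ: whenever real coefficients c₁,...,c_N satisfy Σⱼ cⱼ f(y|μⱼ,σⱼ) = 0 for all y ∈ ℝ, then all cⱼ = 0. -/
open Filter Real

lemma exp_quad_tendsto_zero {a b : ℝ} (h : a < 0 ∨ (a = 0 ∧ b < 0)) :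
    Tendsto (fun y : ℝ => Real.exp (a * y ^ 2 + b * y)) atTop (nhds 0) := by
  have key : Tendsto (fun y : ℝ => a * y ^ 2 + b * y) atTop atBot := by
    rcases h with ha | ⟨ha, hb⟩
    · have h1 : Tendsto (fun y : ℝ => a * y + b) atTop atBot :=
        (tendsto_id.const_mul_atTop_of_neg ha).atBot_add tendsto_const_nhds
      have h2 : Tendsto (fun y : ℝ => (a * y + b) * y) atTop atBot :=
        h1.atBot_mul_atTop₀ tendsto_id
      refine h2.congr (fun y => by ring)
    · subst ha
      have h1 : Tendsto (fun y : ℝ => b * y) atTop atBot :=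
        tendsto_id.const_mul_atTop_of_neg hb
      refine h1.congr (fun y => by ring)
  exact Real.tendsto_exp_atBot.comp key

lemma key_lemma {ι : Type*} [DecidableEq ι] (a b : ι → ℝ)
    (s : Finset ι) (d : ι → ℝ)
    (hinj : ∀ i ∈ s, ∀ j ∈ s, a i = a j → b i = b j → i = j)
    (h : ∀ y : ℝ, ∑ j ∈ s, d j * Real.exp (a j * y ^ 2 + b j * y) = 0) :
    ∀ j ∈ s, d j = 0 := by
  induction s using Finset.strongInduction with
  | _ s ih =>
    rcases s.eq_empty_or_nonempty with rfl | hne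
    · simp
    obtain ⟨j0, hj0, hmax⟩ := s.exists_max_image (fun j => toLex (a j, b j)) hne
    -- the normalized sum
    have hF : ∀ y : ℝ, d j0 + ∑ j ∈ s.erase j0,
        d j * Real.exp ((a j - a j0) * y ^ 2 + (b j - b j0) * y) = 0 := by
      intro y
      have := h y
      have h2 : (∑ j ∈ s, d j * Real.exp (a j * y ^ 2 + b j * y))
          * Real.exp (-(a j0 * y ^ 2 + b j0 * y)) = 0 := by rw [this]; ring
      rw [Finset.sum_mul] at h2
      rw [← Finset.add_sum_erase _ _ hj0] at h2
      calc d j0 + ∑ j ∈ s.erase j0,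
            d j * Real.exp ((a j - a j0) * y ^ 2 + (b j - b j0) * y)
          = d j0 * Real.exp (a j0 * y ^ 2 + b j0 * y)
              * Real.exp (-(a j0 * y ^ 2 + b j0 * y)) +
            ∑ j ∈ s.erase j0, d j * Real.exp (a j * y ^ 2 + b j * y)
              * Real.exp (-(a j0 * y ^ 2 + b j0 * y)) := by
            congr 1
            · rw [mul_assoc, ← Real.exp_add,
                show a j0 * y ^ 2 + b j0 * y + -(a j0 * y ^ 2 + b j0 * y) = 0 by ring,
                Real.exp_zero, mul_one]
            · refine Finset.sum_congr rfl fun j _ => ?_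
              rw [mul_assoc, ← Real.exp_add]
              congr 2
              ring
        _ = 0 := h2
    have hd0 : d j0 = 0 := by
      have htend : Tendsto (fun y : ℝ => d j0 + ∑ j ∈ s.erase j0,
          d j * Real.exp ((a j - a j0) * y ^ 2 + (b j - b j0) * y)) atTop
          (nhds (d j0 + ∑ j ∈ s.erase j0, (0:ℝ))) := by
        refine tendsto_const_nhds.add (tendsto_finset_sum _ fun j hj => ?_)
        have hjs : j ∈ s := Finset.mem_of_mem_erase hj
        have hjne : j ≠ j0 := Finset.ne_of_mem_erase hj
        have hle : toLex (a j, b j) ≤ toLex (a j0, b j0) := hmax j hjs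
        have hlt : toLex (a j, b j) < toLex (a j0, b j0) := by
          rcases hle.lt_or_eq with hlt | heq
          · exact hlt
          · exfalso
            have : (a j, b j) = (a j0, b j0) := by
              exact_mod_cast congrArg ofLex heq
            exact hjne (hinj j hjs j0 hj0 (congrArg Prod.fst this) (congrArg Prod.snd this))
        rw [Prod.Lex.lt_iff] at hlt
        simp only [ofLex_toLex] at hlt
        have : Tendsto (fun y : ℝ =>
            Real.exp ((a j - a j0) * y ^ 2 + (b j - b j0) * y)) atTop (nhds 0) := by
          apply exp_quad_tendsto_zero
          rcases hlt with h1 | ⟨h1, h2⟩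
          · left; linarith
          · right; constructor <;> [linarith; linarith]
        simpa using this.const_mul (d j)
      have h0 : Tendsto (fun _ : ℝ => (0:ℝ)) atTop (nhds (0:ℝ)) := tendsto_const_nhds
      have := tendsto_nhds_unique (htend.congr fun y => (hF y).symm ▸ rfl) h0
      simpa using this
    refine fun j hj => ?_
    rcases eq_or_ne j j0 with rfl | hjne
    · exact hd0
    · have herase : ∀ y : ℝ, ∑ k ∈ s.erase j0,
          d k * Real.exp (a k * y ^ 2 + b k * y) = 0 := by
        intro y
        have := h y
        rw [← Finset.add_sum_erase _ _ hj0, hd0, zero_mul, zero_add] at this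
        exact this
      exact ih (s.erase j0) (Finset.erase_ssubset hj0)
        (fun i hi k hk => hinj i (Finset.mem_of_mem_erase hi) k (Finset.mem_of_mem_erase hk))
        herase j (Finset.mem_erase.2 ⟨hjne, hj⟩)

/-- The univariate Gaussian density with mean `μ` and variance `σ`. -/
noncomputable def gpdf (y μ σ : ℝ) : ℝ :=
  (Real.sqrt (2 * Real.pi * σ))⁻¹ * Real.exp (-(y - μ) ^ 2 / (2 * σ))

/-- Gaussian densities with pairwise distinct (mean, variance) parameters are
linearly independent over `ℝ`. -/
theorem gaussian_linearIndependent (N : ℕ) (μ σ : Fin N → ℝ)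
    (hσ : ∀ j, 0 < σ j)
    (hdist : Function.Injective (fun j => (μ j, σ j)))
    (c : Fin N → ℝ)
    (h : ∀ y : ℝ, ∑ j : Fin N, c j * gpdf y (μ j) (σ j) = 0) :
    ∀ j, c j = 0 := by
  set a : Fin N → ℝ := fun j => -(2 * σ j)⁻¹ with ha
  set b : Fin N → ℝ := fun j => μ j / σ j with hb
  set d : Fin N → ℝ := fun j =>
    c j * (Real.sqrt (2 * Real.pi * σ j))⁻¹ * Real.exp (-(μ j) ^ 2 / (2 * σ j)) with hd
  have hrw : ∀ j (y : ℝ), c j * gpdf y (μ j) (σ j)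
      = d j * Real.exp (a j * y ^ 2 + b j * y) := by
    intro j y
    have hσj := (hσ j).ne'
    have hexp : Real.exp (-(y - μ j) ^ 2 / (2 * σ j))
        = Real.exp (-(μ j) ^ 2 / (2 * σ j)) * Real.exp (a j * y ^ 2 + b j * y) := by
      rw [← Real.exp_add]
      congr 1
      rw [ha, hb]
      field_simp
      ring
    rw [hd, gpdf, hexp]
    ring
  have hinj : ∀ i ∈ (Finset.univ : Finset (Fin N)), ∀ j ∈ (Finset.univ : Finset (Fin N)),
      a i = a j → b i = b j → i = j := by
    intro i _ j _ hai hbj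
    have hσi := (hσ i).ne'
    have hσj := (hσ j).ne'
    have hσeq : σ i = σ j := by
      rw [ha] at hai
      simp only at hai
      have : (2 * σ i)⁻¹ = (2 * σ j)⁻¹ := by linarith
      have h2 : 2 * σ i = 2 * σ j := by
        have := inv_injective this
        exact this
      linarith
    have hμeq : μ i = μ j := by
      rw [hb] at hbj
      simp only at hbj
      rw [hσeq] at hbj
      rw [div_eq_mul_inv, div_eq_mul_inv] at hbj
      exact mul_right_cancel₀ (inv_ne_zero hσj) hbj
    exact hdist (by simp [hμeq, hσeq])
  have hsum : ∀ y : ℝ, ∑ j ∈ (Finset.univ : Finset (Fin N)),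
      d j * Real.exp (a j * y ^ 2 + b j * y) = 0 := by
    intro y
    rw [← h y]
    exact Finset.sum_congr rfl fun j _ => (hrw j y).symm
  intro j
  have hdj : d j = 0 := key_lemma a b Finset.univ d hinj hsum j (Finset.mem_univ j)
  rw [hd] at hdj
  simp only at hdj
  have h1 : (Real.sqrt (2 * Real.pi * σ j))⁻¹ ≠ 0 := by
    have h0 : 0 < σ j := hσ j
    have : 0 < 2 * Real.pi * σ j := by positivity
    exact inv_ne_zero (Real.sqrt_pos.2 this).ne'
  have h2 : Real.exp (-(μ j) ^ 2 / (2 * σ j)) ≠ 0 := Real.exp_ne_zero _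
  rcases mul_eq_zero.1 hdj with h3 | h3
  · rcases mul_eq_zero.1 h3 with h4 | h4
    · exact h4
    · exact absurd h4 h1
  · exact absurd h3 h2
end

section
/- Let p(y|x) = Σ_{i=1}^{k} p_i f(y|a_iᵀx + b_i, σ_i) and p'(y|x) = Σ_{i=1}^{k'} p'_i f(y|(a'_i)ᵀx + b'_i, σ'_i) be Gaussian mixtures of experts with positive weights summing to one, pairwise distinct triples (a_i,b_i,σ_i) and pairwise distinct triples (a'_i,b'_i,σ'_i). If p(y|x) = p'(y|x) for almost every (x,y) in X × ℝ, where X ⊆ ℝ^d has positive Lebesgue measure, then k = k' and the two collections of weighted atoms coincide up to permutation: there is a permutation τ of {1,...,k} with p_i = p'_{τ(i)} and (a_i,b_i,σ_i) = (a'_{τ(i)}, b'_{τ(i)}, σ'_{τ(i)}) for all i. -/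
open MeasureTheory Filter

lemma gpdf_pos (y μ σ : ℝ) (h : 0 < σ) : 0 < gpdf y μ σ := by
  unfold gpdf
  have : 0 < 2 * Real.pi * σ := by positivity
  positivity

lemma gpdf_continuous (μ σ : ℝ) : Continuous (fun y => gpdf y μ σ) := by
  unfold gpdf; fun_prop

lemma quad_tendsto_atBot (A B C : ℝ) (h : A < 0 ∨ (A = 0 ∧ B < 0)) :
    Tendsto (fun y : ℝ => A * y ^ 2 + B * y + C) atTop atBot := by
  rcases h with hA | ⟨hA, hB⟩
  · have h1 : Tendsto (fun y : ℝ => A * y + B) atTop atBot := by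
      apply tendsto_atBot_add_const_right
      exact Tendsto.const_mul_atTop_of_neg hA tendsto_id
    have h2 : Tendsto (fun y : ℝ => (A * y + B) * y) atTop atBot := by
      apply Tendsto.atBot_mul_atTop₀ h1 tendsto_id
    have := tendsto_atBot_add_const_right atTop C h2
    convert this using 2 with y
    ring
  · subst hA
    have h1 : Tendsto (fun y : ℝ => B * y) atTop atBot :=
      Tendsto.const_mul_atTop_of_neg hB tendsto_id
    have := tendsto_atBot_add_const_right atTop C h1
    convert this using 2 with y
    ring

lemma ratio_tendsto_zero (μ σ μs σs : ℝ) (hσ : 0 < σ) (hσs : 0 < σs)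
    (hlt : σ < σs ∨ (σ = σs ∧ μ < μs)) :
    Tendsto (fun y => gpdf y μ σ / gpdf y μs σs) atTop (nhds 0) := by
  have hfun : ∀ y, gpdf y μ σ / gpdf y μs σs
      = (Real.sqrt (2 * Real.pi * σs) / Real.sqrt (2 * Real.pi * σ))
        * Real.exp ((1/(2*σs) - 1/(2*σ)) * y ^ 2 + (μ/σ - μs/σs) * y
            + (μs^2/(2*σs) - μ^2/(2*σ))) := by
    intro y
    unfold gpdf
    have hE : -(y - μ)^2/(2*σ) - (-(y - μs)^2/(2*σs))
        = (1/(2*σs) - 1/(2*σ)) * y ^ 2 + (μ/σ - μs/σs) * y + (μs^2/(2*σs) - μ^2/(2*σ)) := by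
      field_simp
      ring
    rw [mul_div_mul_comm, ← Real.exp_sub, hE, inv_div_inv]
  rw [funext hfun]
  rw [show (0:ℝ) = (Real.sqrt (2 * Real.pi * σs) / Real.sqrt (2 * Real.pi * σ)) * 0 by ring]
  apply Tendsto.const_mul
  apply Real.tendsto_exp_atBot.comp
  apply quad_tendsto_atBot
  rcases hlt with h | ⟨h, hμ⟩
  · left
    have : 1/(2*σs) < 1/(2*σ) := by
      apply one_div_lt_one_div_of_lt (by linarith) (by linarith)
    linarith
  · right
    subst h
    constructor
    · ring
    · have h2 : μ/σ < μs/σ := by apply div_lt_div_of_pos_right hμ hσ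
      linarith

/-- Key analytic lemma: if a finite linear combination of Gaussian densities vanishes
identically, then the total coefficient on every fiber of `(μ, σ)` vanishes. -/
lemma key {ι : Type*} [DecidableEq ι] (s : Finset ι) (c μ σ : ι → ℝ)
    (hσ : ∀ m ∈ s, 0 < σ m)
    (h : ∀ y, ∑ m ∈ s, c m * gpdf y (μ m) (σ m) = 0) :
    ∀ m ∈ s, ∑ m' ∈ s.filter (fun m' => μ m' = μ m ∧ σ m' = σ m), c m' = 0 := by
  induction s using Finset.strongInduction with
  | _ s ih =>
  intro m hm
  have hne : s.Nonempty := ⟨m, hm⟩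
  set σs := s.sup' hne σ with hσs
  have hF1ne : (s.filter (fun m' => σ m' = σs)).Nonempty := by
    obtain ⟨m₁, hm₁, hval⟩ := Finset.exists_mem_eq_sup' hne σ
    exact ⟨m₁, Finset.mem_filter.2 ⟨hm₁, hval.symm⟩⟩
  set μs := (s.filter (fun m' => σ m' = σs)).sup' hF1ne μ with hμs
  set F := s.filter (fun m' => μ m' = μs ∧ σ m' = σs) with hF
  have hFne : F.Nonempty := by
    obtain ⟨m₂, hm₂, hval⟩ := Finset.exists_mem_eq_sup' hF1ne μ
    rw [Finset.mem_filter] at hm₂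
    exact ⟨m₂, Finset.mem_filter.2 ⟨hm₂.1, hval.symm, hm₂.2⟩⟩
  have hFsub : F ⊆ s := Finset.filter_subset _ _
  have hσspos : 0 < σs := by
    obtain ⟨m₂, hm₂⟩ := hFne
    rw [hF, Finset.mem_filter] at hm₂
    exact hm₂.2.2 ▸ hσ m₂ hm₂.1
  have hFzero : ∑ m' ∈ F, c m' = 0 := by
    have htend : Tendsto (fun y => ∑ m' ∈ s, c m' * (gpdf y (μ m') (σ m') / gpdf y μs σs))
        atTop (nhds (∑ m' ∈ s, if m' ∈ F then c m' else 0)) := by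
      apply tendsto_finset_sum
      intro m' hm'
      by_cases hmem : m' ∈ F
      · simp only [hmem, if_pos]
        rw [hF, Finset.mem_filter] at hmem
        have : ∀ y, c m' * (gpdf y (μ m') (σ m') / gpdf y μs σs) = c m' := by
          intro y
          rw [hmem.2.1, hmem.2.2, div_self (gpdf_pos y μs σs hσspos).ne']
          ring
        rw [funext this]
        exact tendsto_const_nhds
      · simp only [hmem, if_neg, not_false_iff]
        rw [show (0:ℝ) = c m' * 0 by ring]
        apply Tendsto.const_mul
        apply ratio_tendsto_zero _ _ _ _ (hσ m' hm') hσspos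
        have hle : σ m' ≤ σs := Finset.le_sup' σ hm'
        rcases lt_or_eq_of_le hle with hlt | heq
        · exact Or.inl hlt
        · right
          refine ⟨heq, ?_⟩
          have hmF1 : m' ∈ s.filter (fun m' => σ m' = σs) := Finset.mem_filter.2 ⟨hm', heq⟩
          have hμle : μ m' ≤ μs := Finset.le_sup' μ hmF1
          rcases lt_or_eq_of_le hμle with h2 | h2
          · exact h2
          · exact absurd (Finset.mem_filter.2 ⟨hm', h2, heq⟩) hmem
    have hzero : ∀ y, ∑ m' ∈ s, c m' * (gpdf y (μ m') (σ m') / gpdf y μs σs) = 0 := by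
      intro y
      have heq2 : ∑ m' ∈ s, c m' * (gpdf y (μ m') (σ m') / gpdf y μs σs)
          = (∑ m' ∈ s, c m' * gpdf y (μ m') (σ m')) / gpdf y μs σs := by
        rw [Finset.sum_div]
        exact Finset.sum_congr rfl fun m' _ => (mul_div_assoc _ _ _).symm
      rw [heq2, h y, zero_div]
    rw [funext hzero] at htend
    have := tendsto_nhds_unique htend tendsto_const_nhds
    rw [← this, ← Finset.sum_filter]
    rw [Finset.filter_mem_eq_inter, Finset.inter_eq_right.mpr hFsub]
  have hs' : ∀ y, ∑ m' ∈ s \ F, c m' * gpdf y (μ m') (σ m') = 0 := by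
    intro y
    have hsplit : ∑ m' ∈ s, c m' * gpdf y (μ m') (σ m')
        = (∑ m' ∈ s \ F, c m' * gpdf y (μ m') (σ m')) + ∑ m' ∈ F, c m' * gpdf y (μ m') (σ m') :=
      (Finset.sum_sdiff hFsub).symm
    have hFsum : ∑ m' ∈ F, c m' * gpdf y (μ m') (σ m') = 0 := by
      have : ∀ m' ∈ F, c m' * gpdf y (μ m') (σ m') = c m' * gpdf y μs σs := by
        intro m' hm'
        rw [hF, Finset.mem_filter] at hm'
        rw [hm'.2.1, hm'.2.2]
      rw [Finset.sum_congr rfl this, ← Finset.sum_mul, hFzero, zero_mul]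
    have := h y
    rw [hsplit, hFsum, add_zero] at this
    exact this
  by_cases hmF : m ∈ F
  · have : s.filter (fun m' => μ m' = μ m ∧ σ m' = σ m) = F := by
      rw [hF, Finset.mem_filter] at hmF
      rw [hF]
      apply Finset.filter_congr
      intro m'' _
      rw [hmF.2.1, hmF.2.2]
    rw [this]
    exact hFzero
  · have hss : s \ F ⊂ s := by
      apply Finset.sdiff_ssubset hFsub hFne
    have hmem : m ∈ s \ F := Finset.mem_sdiff.2 ⟨hm, hmF⟩
    have := ih (s \ F) hss (fun m'' hm'' => hσ m'' (Finset.mem_sdiff.1 hm'').1) hs' m hmem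
    have hfeq : s.filter (fun m' => μ m' = μ m ∧ σ m' = σ m)
        = (s \ F).filter (fun m' => μ m' = μ m ∧ σ m' = σ m) := by
      ext m''
      simp only [Finset.mem_filter, Finset.mem_sdiff]
      constructor
      · rintro ⟨hm''s, h1, h2⟩
        refine ⟨⟨hm''s, fun hm''F => ?_⟩, h1, h2⟩
        rw [hF, Finset.mem_filter] at hm''F
        rw [hF, Finset.mem_filter] at hmF
        exact hmF ⟨hm, h1 ▸ hm''F.2.1, h2 ▸ hm''F.2.2⟩
      · rintro ⟨⟨hm''s, _⟩, h1, h2⟩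
        exact ⟨hm''s, h1, h2⟩
    rw [hfeq]
    exact this

/-- Fiber equation for two equal mixtures. -/
lemma fiber_eq {k k' : ℕ} (p μ σ : Fin k → ℝ) (p' μ' σ' : Fin k' → ℝ)
    (hσ : ∀ i, 0 < σ i) (hσ' : ∀ j, 0 < σ' j)
    (h : ∀ y, ∑ i, p i * gpdf y (μ i) (σ i) = ∑ j, p' j * gpdf y (μ' j) (σ' j))
    (i : Fin k) :
    (∑ i', if μ i' = μ i ∧ σ i' = σ i then p i' else 0)
      = ∑ j, if μ' j = μ i ∧ σ' j = σ i then p' j else 0 := by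
  classical
  set c : Fin k ⊕ Fin k' → ℝ := Sum.elim p (fun j => -p' j) with hc
  set μc : Fin k ⊕ Fin k' → ℝ := Sum.elim μ μ' with hμc
  set σc : Fin k ⊕ Fin k' → ℝ := Sum.elim σ σ' with hσc
  have h0 : ∀ y, ∑ m ∈ Finset.univ, c m * gpdf y (μc m) (σc m) = 0 := by
    intro y
    rw [Fintype.sum_sum_type]
    simp only [hc, hμc, hσc, Sum.elim_inl, Sum.elim_inr]
    have := h y
    have : ∑ j, -p' j * gpdf y (μ' j) (σ' j) = -∑ j, p' j * gpdf y (μ' j) (σ' j) := by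
      rw [← Finset.sum_neg_distrib]
      exact Finset.sum_congr rfl fun j _ => by ring
    rw [this, h y]
    ring
  have hσcpos : ∀ m ∈ (Finset.univ : Finset (Fin k ⊕ Fin k')), 0 < σc m := by
    rintro (i' | j') _
    · exact hσ i'
    · exact hσ' j'
  have := key Finset.univ c μc σc hσcpos h0 (Sum.inl i) (Finset.mem_univ _)
  rw [Finset.sum_filter, Fintype.sum_sum_type] at this
  simp only [hc, hμc, hσc, Sum.elim_inl, Sum.elim_inr] at this
  have hneg : ∑ j, (if μ' j = μ i ∧ σ' j = σ i then -p' j else 0)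
      = -∑ j, (if μ' j = μ i ∧ σ' j = σ i then p' j else 0) := by
    rw [← Finset.sum_neg_distrib]
    refine Finset.sum_congr rfl fun j _ => ?_
    split <;> simp
  rw [hneg] at this
  linarith

/-- A hyperplane has Lebesgue measure zero. -/
lemma null_hyperplane (d : ℕ) (v : Fin d → ℝ) (hv : v ≠ 0) (c : ℝ) :
    volume {x : Fin d → ℝ | ∑ t, v t * x t = c} = 0 := by
  set L : (Fin d → ℝ) →ₗ[ℝ] ℝ := ∑ t, v t • (LinearMap.proj t) with hL
  have hLapp : ∀ x, L x = ∑ t, v t * x t := by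
    intro x; simp [hL, LinearMap.sum_apply]
  obtain ⟨t₀, ht₀⟩ : ∃ t, v t ≠ 0 := by
    by_contra h; push_neg at h; exact hv (funext h)
  have hLne : L ≠ 0 := by
    intro h
    have := congrArg (fun f => f (Pi.single t₀ 1)) h
    simp [hLapp, Pi.single_apply, mul_ite] at this
    exact ht₀ this
  set x₀ : Fin d → ℝ := Pi.single t₀ (c / v t₀) with hx₀
  have hLx₀ : L x₀ = c := by
    rw [hLapp, Finset.sum_eq_single t₀]
    · simp [hx₀]; field_simp
    · intro b _ hb; simp [hx₀, Pi.single_apply, hb]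
    · simp
  have hset : {x : Fin d → ℝ | ∑ t, v t * x t = c} = (fun x => x + (-x₀)) ⁻¹' (LinearMap.ker L) := by
    ext x
    show (∑ t, v t * x t = c) ↔ _
    rw [← hLapp, Set.mem_preimage, SetLike.mem_coe, LinearMap.mem_ker, map_add, map_neg, hLx₀]
    constructor
    · intro h; rw [h]; ring
    · intro h; linarith
  rw [hset, measure_preimage_add_right]
  exact Measure.addHaar_submodule _ _ (by simpa [Ne, LinearMap.ker_eq_top] using hLne)

/-- Null set of points where two different affine functions agree. -/
lemma null_affine_ne (d : ℕ) (u : Fin d → ℝ) (cu : ℝ) (v : Fin d → ℝ) (cv : ℝ)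
    (h : ¬(u = v ∧ cu = cv)) :
    volume {x : Fin d → ℝ | ∑ t, u t * x t + cu = ∑ t, v t * x t + cv} = 0 := by
  by_cases huv : u = v
  · subst huv
    have hcc : cu ≠ cv := fun hc => h ⟨rfl, hc⟩
    have : {x : Fin d → ℝ | ∑ t, u t * x t + cu = ∑ t, u t * x t + cv} = ∅ := by
      ext x
      simp only [Set.mem_setOf_eq, Set.mem_empty_iff_false, iff_false]
      intro hcon
      exact hcc (by linarith)
    rw [this]
    exact measure_empty
  · have hset : {x : Fin d → ℝ | ∑ t, u t * x t + cu = ∑ t, v t * x t + cv}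
        = {x : Fin d → ℝ | ∑ t, (fun t => u t - v t) t * x t = cv - cu} := by
      ext x
      simp only [Set.mem_setOf_eq]
      rw [show ∑ t, (u t - v t) * x t = (∑ t, u t * x t) - ∑ t, v t * x t by
        rw [← Finset.sum_sub_distrib]; exact Finset.sum_congr rfl fun t _ => by ring]
      constructor
      · intro h'; linarith
      · intro h'; linarith
    rw [hset]
    apply null_hyperplane
    intro hz
    apply huv
    funext t
    have := congrFun hz t
    simpa [sub_eq_zero] using this

/-- For two mixtures equal on a positive-measure set, every atom of the first
family appears among the atoms of the second. -/
lemma exists_match (d : ℕ) {k k' : ℕ}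
    (p : Fin k → ℝ) (a : Fin k → (Fin d → ℝ)) (b : Fin k → ℝ) (σ : Fin k → ℝ)
    (p' : Fin k' → ℝ) (a' : Fin k' → (Fin d → ℝ)) (b' : Fin k' → ℝ) (σ' : Fin k' → ℝ)
    (hp : ∀ i, 0 < p i) (hp' : ∀ j, 0 < p' j)
    (hσ : ∀ i, 0 < σ i) (hσ' : ∀ j, 0 < σ' j)
    (G : Set (Fin d → ℝ)) (hGpos : 0 < volume G)
    (hG : ∀ x ∈ G, ∀ y, ∑ i, p i * gpdf y (∑ t, a i t * x t + b i) (σ i)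
        = ∑ j, p' j * gpdf y (∑ t, a' j t * x t + b' j) (σ' j)) :
    ∀ i, ∃ j, a i = a' j ∧ b i = b' j ∧ σ i = σ' j := by
  intro i
  by_contra hno
  push_neg at hno
  have hGsub : G ⊆ ⋃ j : Fin k',
      {x : Fin d → ℝ | σ' j = σ i ∧ ∑ t, a' j t * x t + b' j = ∑ t, a i t * x t + b i} := by
    intro x hx
    have hfib := fiber_eq p (fun i' => ∑ t, a i' t * x t + b i') σ
      p' (fun j => ∑ t, a' j t * x t + b' j) σ' hσ hσ' (hG x hx) i
    have hpos : 0 < ∑ i', if (∑ t, a i' t * x t + b i') = (∑ t, a i t * x t + b i)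
        ∧ σ i' = σ i then p i' else 0 := by
      have hterm : (if (∑ t, a i t * x t + b i) = (∑ t, a i t * x t + b i)
          ∧ σ i = σ i then p i else 0) = p i := if_pos ⟨rfl, rfl⟩
      calc 0 < p i := hp i
        _ = _ := hterm.symm
        _ ≤ _ := Finset.single_le_sum (f := fun i' =>
            if (∑ t, a i' t * x t + b i') = (∑ t, a i t * x t + b i)
              ∧ σ i' = σ i then p i' else 0)
            (fun i' _ => by split; exacts [(hp i').le, le_rfl]) (Finset.mem_univ i)
    rw [hfib] at hpos
    by_contra hcon
    simp only [Set.mem_iUnion, Set.mem_setOf_eq, not_exists] at hcon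
    have : ∑ j, (if (∑ t, a' j t * x t + b' j) = (∑ t, a i t * x t + b i)
        ∧ σ' j = σ i then p' j else 0) = 0 := by
      apply Finset.sum_eq_zero
      intro j _
      rw [if_neg]
      intro ⟨h1, h2⟩
      exact hcon j ⟨h2, h1⟩
    rw [this] at hpos
    exact lt_irrefl 0 hpos
  have hnull : volume (⋃ j : Fin k',
      {x : Fin d → ℝ | σ' j = σ i ∧ ∑ t, a' j t * x t + b' j = ∑ t, a i t * x t + b i}) = 0 := by
    apply measure_iUnion_null
    intro j
    by_cases hσij : σ' j = σ i
    · have hsub : {x : Fin d → ℝ | σ' j = σ i ∧ ∑ t, a' j t * x t + b' j = ∑ t, a i t * x t + b i}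
          ⊆ {x : Fin d → ℝ | ∑ t, a' j t * x t + b' j = ∑ t, a i t * x t + b i} :=
        fun x hx => hx.2
      apply measure_mono_null hsub
      apply null_affine_ne
      rintro ⟨h1, h2⟩
      exact hno j h1.symm h2.symm hσij.symm
    · have : {x : Fin d → ℝ | σ' j = σ i ∧ ∑ t, a' j t * x t + b' j = ∑ t, a i t * x t + b i}
          = ∅ := by
        ext x; simp only [Set.mem_setOf_eq, Set.mem_empty_iff_false, iff_false]
        rintro ⟨h1, _⟩; exact hσij h1
      rw [this]; exact measure_empty
  exact absurd (measure_mono_null hGsub hnull) hGpos.ne'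

/-- Identifiability of Gaussian mixtures of experts: if two mixtures of Gaussian
experts with affine mean functions agree for almost every `(x, y)` with `x` in a
set of positive Lebesgue measure, then they have the same number of components
and the weighted atoms coincide up to a permutation. -/
theorem gaussian_mixture_of_experts_identifiable
    (d k k' : ℕ)
    (p : Fin k → ℝ) (a : Fin k → (Fin d → ℝ)) (b : Fin k → ℝ) (σ : Fin k → ℝ)
    (p' : Fin k' → ℝ) (a' : Fin k' → (Fin d → ℝ)) (b' : Fin k' → ℝ) (σ' : Fin k' → ℝ)
    (hp : ∀ i, 0 < p i) (hp1 : ∑ i, p i = 1)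
    (hp' : ∀ i, 0 < p' i) (hp1' : ∑ i, p' i = 1)
    (hσ : ∀ i, 0 < σ i) (hσ' : ∀ i, 0 < σ' i)
    (hatoms : Function.Injective (fun i => (a i, b i, σ i)))
    (hatoms' : Function.Injective (fun i => (a' i, b' i, σ' i)))
    (X : Set (Fin d → ℝ)) (hX : MeasurableSet X) (hXpos : 0 < volume X)
    (heq : ∀ᵐ z : (Fin d → ℝ) × ℝ, z.1 ∈ X →
      ∑ i, p i * gpdf z.2 (∑ t, a i t * z.1 t + b i) (σ i)
        = ∑ i, p' i * gpdf z.2 (∑ t, a' i t * z.1 t + b' i) (σ' i)) :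
    k = k' ∧ ∃ τ : Fin k ≃ Fin k',
      ∀ i, p i = p' (τ i) ∧ a i = a' (τ i) ∧ b i = b' (τ i) ∧ σ i = σ' (τ i) := by
  classical
  -- Step 1: almost-every x in X, equality of mixtures for ALL y
  set P : (Fin d → ℝ) → Prop := fun x => ∀ y,
      ∑ i, p i * gpdf y (∑ t, a i t * x t + b i) (σ i)
        = ∑ j, p' j * gpdf y (∑ t, a' j t * x t + b' j) (σ' j) with hP
  have hae : ∀ᵐ x : Fin d → ℝ, x ∈ X → P x := by
    have heq2 : ∀ᵐ z : (Fin d → ℝ) × ℝ ∂((volume : Measure (Fin d → ℝ)).prod volume),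
        z.1 ∈ X → ∑ i, p i * gpdf z.2 (∑ t, a i t * z.1 t + b i) (σ i)
          = ∑ j, p' j * gpdf z.2 (∑ t, a' j t * z.1 t + b' j) (σ' j) := by
      rw [← Measure.volume_eq_prod]; exact heq
    have heq' := Measure.ae_ae_of_ae_prod heq2
    filter_upwards [heq'] with x hx hxX
    have haey : (fun y => ∑ i, p i * gpdf y (∑ t, a i t * x t + b i) (σ i))
        =ᵐ[volume] (fun y => ∑ j, p' j * gpdf y (∑ t, a' j t * x t + b' j) (σ' j)) := by
      filter_upwards [hx] with y hy using hy hxX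
    have hc1 : Continuous (fun y => ∑ i, p i * gpdf y (∑ t, a i t * x t + b i) (σ i)) := by
      apply continuous_finset_sum
      intro i _
      exact continuous_const.mul (gpdf_continuous _ _)
    have hc2 : Continuous (fun y => ∑ j, p' j * gpdf y (∑ t, a' j t * x t + b' j) (σ' j)) := by
      apply continuous_finset_sum
      intro j _
      exact continuous_const.mul (gpdf_continuous _ _)
    intro y
    exact congrFun ((hc1.ae_eq_iff_eq volume hc2).1 haey) y
  -- the good set
  set G : Set (Fin d → ℝ) := {x | x ∈ X ∧ P x} with hG
  have hGpos : 0 < volume G := by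
    set N : Set (Fin d → ℝ) := {x | ¬(x ∈ X → P x)} with hN
    have hNnull : volume N = 0 := hae
    have hXsub : X ⊆ G ∪ N := by
      intro x hx
      by_cases hPx : P x
      · exact Or.inl ⟨hx, hPx⟩
      · exact Or.inr (fun hcon => hPx (hcon hx))
    by_contra hcon
    push_neg at hcon
    have hG0 : volume G = 0 := le_antisymm hcon zero_le
    have hle : volume X ≤ volume (G ∪ N) := measure_mono hXsub
    have hfin : volume X ≤ 0 :=
      le_trans hle (le_trans (measure_union_le _ _) (by rw [hG0, hNnull]; simp))
    exact hXpos.not_ge hfin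
  have hGmix : ∀ x ∈ G, ∀ y, ∑ i, p i * gpdf y (∑ t, a i t * x t + b i) (σ i)
      = ∑ j, p' j * gpdf y (∑ t, a' j t * x t + b' j) (σ' j) := fun x hx => hx.2
  -- Step 2: matching in both directions
  have hmatch : ∀ i, ∃ j, a i = a' j ∧ b i = b' j ∧ σ i = σ' j :=
    exists_match d p a b σ p' a' b' σ' hp hp' hσ hσ' G hGpos hGmix
  have hmatch' : ∀ j, ∃ i, a' j = a i ∧ b' j = b i ∧ σ' j = σ i :=
    exists_match d p' a' b' σ' p a b σ hp' hp hσ' hσ G hGpos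
      (fun x hx y => (hGmix x hx y).symm)
  set f : Fin k → Fin k' := fun i => (hmatch i).choose with hf
  have hfspec : ∀ i, a i = a' (f i) ∧ b i = b' (f i) ∧ σ i = σ' (f i) :=
    fun i => (hmatch i).choose_spec
  set g : Fin k' → Fin k := fun j => (hmatch' j).choose with hg
  have hgspec : ∀ j, a' j = a (g j) ∧ b' j = b (g j) ∧ σ' j = σ (g j) :=
    fun j => (hmatch' j).choose_spec
  have hgf : ∀ i, g (f i) = i := by
    intro i
    apply hatoms
    show (a (g (f i)), b (g (f i)), σ (g (f i))) = (a i, b i, σ i)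
    rw [← (hgspec (f i)).1, ← (hgspec (f i)).2.1, ← (hgspec (f i)).2.2,
      ← (hfspec i).1, ← (hfspec i).2.1, ← (hfspec i).2.2]
  have hfg : ∀ j, f (g j) = j := by
    intro j
    apply hatoms'
    show (a' (f (g j)), b' (f (g j)), σ' (f (g j))) = (a' j, b' j, σ' j)
    rw [← (hfspec (g j)).1, ← (hfspec (g j)).2.1, ← (hfspec (g j)).2.2,
      ← (hgspec j).1, ← (hgspec j).2.1, ← (hgspec j).2.2]
  set τ : Fin k ≃ Fin k' := ⟨f, g, hgf, hfg⟩ with hτ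
  have hkk' : k = k' := by simpa using Fintype.card_congr τ
  refine ⟨hkk', τ, fun i => ?_⟩
  refine ⟨?_, (hfspec i).1, (hfspec i).2.1, (hfspec i).2.2⟩
  -- Step 3: weight equality, via a generic point avoiding collision hyperplanes
  set B1 : Set (Fin d → ℝ) := ⋃ i₁ : Fin k, ⋃ i₂ : Fin k,
    {x | (i₁ ≠ i₂ ∧ σ i₁ = σ i₂) ∧ ∑ t, a i₁ t * x t + b i₁ = ∑ t, a i₂ t * x t + b i₂} with hB1
  set B2 : Set (Fin d → ℝ) := ⋃ j₁ : Fin k', ⋃ j₂ : Fin k',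
    {x | (j₁ ≠ j₂ ∧ σ' j₁ = σ' j₂) ∧
      ∑ t, a' j₁ t * x t + b' j₁ = ∑ t, a' j₂ t * x t + b' j₂} with hB2
  have hB1null : volume B1 = 0 := by
    apply measure_iUnion_null; intro i₁; apply measure_iUnion_null; intro i₂
    by_cases hcase : i₁ ≠ i₂ ∧ σ i₁ = σ i₂
    · apply measure_mono_null (fun x hx => hx.2)
      apply null_affine_ne
      rintro ⟨h1, h2⟩
      exact hcase.1 (hatoms (by simp [h1, h2, hcase.2]))
    · have : {x : Fin d → ℝ | (i₁ ≠ i₂ ∧ σ i₁ = σ i₂) ∧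
          ∑ t, a i₁ t * x t + b i₁ = ∑ t, a i₂ t * x t + b i₂} = ∅ := by
        ext x; simp only [Set.mem_setOf_eq, Set.mem_empty_iff_false, iff_false]
        rintro ⟨h1, _⟩; exact hcase h1
      rw [this]; exact measure_empty
  have hB2null : volume B2 = 0 := by
    apply measure_iUnion_null; intro j₁; apply measure_iUnion_null; intro j₂
    by_cases hcase : j₁ ≠ j₂ ∧ σ' j₁ = σ' j₂
    · apply measure_mono_null (fun x hx => hx.2)
      apply null_affine_ne
      rintro ⟨h1, h2⟩
      exact hcase.1 (hatoms' (by simp [h1, h2, hcase.2]))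
    · have : {x : Fin d → ℝ | (j₁ ≠ j₂ ∧ σ' j₁ = σ' j₂) ∧
          ∑ t, a' j₁ t * x t + b' j₁ = ∑ t, a' j₂ t * x t + b' j₂} = ∅ := by
        ext x; simp only [Set.mem_setOf_eq, Set.mem_empty_iff_false, iff_false]
        rintro ⟨h1, _⟩; exact hcase h1
      rw [this]; exact measure_empty
  have hx₀ : (G \ (B1 ∪ B2)).Nonempty := by
    rw [Set.nonempty_iff_ne_empty]
    intro hcon
    have hsub : G ⊆ B1 ∪ B2 := by
      intro x hx
      by_contra hxn
      exact Set.eq_empty_iff_forall_notMem.1 hcon x ⟨hx, hxn⟩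
    have : volume G = 0 := measure_mono_null hsub
      (le_antisymm (le_trans (measure_union_le _ _) (by rw [hB1null, hB2null]; simp))
        zero_le)
    exact hGpos.ne' this
  obtain ⟨x₀, hx₀G, hx₀B⟩ := hx₀
  have hx₀B1 : x₀ ∉ B1 := fun h => hx₀B (Or.inl h)
  have hx₀B2 : x₀ ∉ B2 := fun h => hx₀B (Or.inr h)
  have hfib := fiber_eq p (fun i' => ∑ t, a i' t * x₀ t + b i') σ
    p' (fun j => ∑ t, a' j t * x₀ t + b' j) σ' hσ hσ' (hGmix x₀ hx₀G) i
  have hLHS : (∑ i', if (∑ t, a i' t * x₀ t + b i') = (∑ t, a i t * x₀ t + b i)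
      ∧ σ i' = σ i then p i' else 0) = p i := by
    rw [Finset.sum_eq_single i]
    · exact if_pos ⟨rfl, rfl⟩
    · intro i' _ hne
      rw [if_neg]
      rintro ⟨h1, h2⟩
      apply hx₀B1
      rw [hB1]
      refine Set.mem_iUnion.2 ⟨i', Set.mem_iUnion.2 ⟨i, ?_⟩⟩
      exact ⟨⟨hne, h2⟩, h1⟩
    · intro h; exact absurd (Finset.mem_univ i) h
  have hμτ : (∑ t, a' (f i) t * x₀ t + b' (f i)) = ∑ t, a i t * x₀ t + b i := by
    rw [← (hfspec i).1, ← (hfspec i).2.1]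
  have hRHS : (∑ j, if (∑ t, a' j t * x₀ t + b' j) = (∑ t, a i t * x₀ t + b i)
      ∧ σ' j = σ i then p' j else 0) = p' (f i) := by
    rw [Finset.sum_eq_single (f i)]
    · exact if_pos ⟨hμτ, ((hfspec i).2.2).symm⟩
    · intro j _ hne
      rw [if_neg]
      rintro ⟨h1, h2⟩
      apply hx₀B2
      rw [hB2]
      refine Set.mem_iUnion.2 ⟨j, Set.mem_iUnion.2 ⟨f i, ?_⟩⟩
      refine ⟨⟨hne, ?_⟩, ?_⟩
      · rw [h2, (hfspec i).2.2]
      · rw [h1, hμτ]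
    · intro h; exact absurd (Finset.mem_univ (f i)) h
  rw [hLHS, hRHS] at hfib
  exact hfib
end

section
/- Let Θ₁ ⊆ ℝ^{q₁} be bounded, and consider the class P of functions that are finite convex combinations of at most k Gaussian experts with parameters in a compact set Θ ⊆ ℝ^d × ℝ × [ℓ, u] with 0 < ℓ ≤ u, over a bounded covariate domain X. Then for any 0 < ε < 1/2, the metric entropy of P in sup-norm satisfies log N(ε, P, ‖·‖_∞) ≲ log(1/ε), where the hidden constant depends on k, d, Θ, X but not on ε. -/
open MeasureTheory

/-- Membership in the class `𝒫_k(Θ)` of Gaussian mixtures of at most `k`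
experts with parameters in `Θ`. -/
def memMixClass (d k : ℕ) (Θ : Set ((Fin d → ℝ) × ℝ × ℝ))
    (g : (Fin d → ℝ) × ℝ → ℝ) : Prop :=
  ∃ (k' : ℕ), k' ≤ k ∧ ∃ (p : Fin k' → ℝ) (θ : Fin k' → (Fin d → ℝ) × ℝ × ℝ),
    (∀ i, 0 ≤ p i) ∧ (∑ i, p i = 1) ∧ (∀ i, θ i ∈ Θ) ∧
    g = fun z => ∑ i, p i * gpdf z.2 (∑ t, (θ i).1 t * z.1 t + (θ i).2.1) (θ i).2.2

lemma exp_neg_le_inv' {x : ℝ} (hx : 0 ≤ x) : Real.exp (-x) ≤ (1 + x)⁻¹ := by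
  rw [Real.exp_neg]
  apply inv_anti₀ (by linarith)
  linarith [Real.add_one_le_exp x]

lemma gpdf_nonneg (y μ σ : ℝ) : 0 ≤ gpdf y μ σ := by
  unfold gpdf; positivity

lemma inv_sqrt_mono {a b : ℝ} (ha : 0 < a) (h : a ≤ b) :
    (Real.sqrt b)⁻¹ ≤ (Real.sqrt a)⁻¹ :=
  inv_anti₀ (Real.sqrt_pos.2 ha) (Real.sqrt_le_sqrt h)

lemma gpdf_le {ℓ σ : ℝ} (hℓ : 0 < ℓ) (h : ℓ ≤ σ) (y μ : ℝ) :
    gpdf y μ σ ≤ (Real.sqrt (2 * Real.pi * ℓ))⁻¹ := by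
  unfold gpdf
  have h1 : Real.exp (-(y - μ) ^ 2 / (2 * σ)) ≤ 1 := by
    apply Real.exp_le_one_iff.2
    apply div_nonpos_of_nonpos_of_nonneg (by simp [sq_nonneg]) (by linarith)
  have h2 : (Real.sqrt (2 * Real.pi * σ))⁻¹ ≤ (Real.sqrt (2 * Real.pi * ℓ))⁻¹ :=
    inv_sqrt_mono (by positivity) (by nlinarith [Real.pi_pos])
  calc (Real.sqrt (2 * Real.pi * σ))⁻¹ * Real.exp (-(y - μ) ^ 2 / (2 * σ))
      ≤ (Real.sqrt (2 * Real.pi * σ))⁻¹ * 1 :=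
        mul_le_mul_of_nonneg_left h1 (by positivity)
    _ ≤ (Real.sqrt (2 * Real.pi * ℓ))⁻¹ := by rw [mul_one]; exact h2

lemma key_mu {σ t : ℝ} (hσ : 0 < σ) :
    |t| / σ * Real.exp (-t ^ 2 / (2 * σ)) ≤ (Real.sqrt (2 * σ))⁻¹ := by
  have h1 : Real.exp (-t ^ 2 / (2 * σ)) ≤ (1 + t ^ 2 / (2 * σ))⁻¹ := by
    have := exp_neg_le_inv' (x := t ^ 2 / (2 * σ)) (by positivity)
    rwa [show -(t ^ 2 / (2 * σ)) = -t ^ 2 / (2 * σ) by ring] at this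
  have h2 : (1 + t ^ 2 / (2 * σ))⁻¹ = 2 * σ / (2 * σ + t ^ 2) := by
    rw [eq_div_iff (by positivity)]
    field_simp
  have hs : Real.sqrt (2 * σ) ^ 2 = 2 * σ := Real.sq_sqrt (by positivity)
  have hspos : 0 < Real.sqrt (2 * σ) := Real.sqrt_pos.2 (by positivity)
  calc |t| / σ * Real.exp (-t ^ 2 / (2 * σ))
      ≤ |t| / σ * (2 * σ / (2 * σ + t ^ 2)) :=
        mul_le_mul_of_nonneg_left (h2 ▸ h1) (by positivity)
    _ = 2 * |t| / (2 * σ + t ^ 2) := by field_simp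
    _ ≤ (Real.sqrt (2 * σ))⁻¹ := by
        rw [div_le_iff₀ (by positivity), inv_mul_eq_div, le_div_iff₀ hspos]
        nlinarith [abs_nonneg t, sq_nonneg (Real.sqrt (2 * σ) - |t|), sq_abs t]

lemma key_sigma {σ t : ℝ} (hσ : 0 < σ) :
    t ^ 2 / (2 * σ) * Real.exp (-t ^ 2 / (2 * σ)) ≤ 1 := by
  have h1 : Real.exp (-t ^ 2 / (2 * σ)) ≤ (1 + t ^ 2 / (2 * σ))⁻¹ := by
    have := exp_neg_le_inv' (x := t ^ 2 / (2 * σ)) (by positivity)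
    rwa [show -(t ^ 2 / (2 * σ)) = -t ^ 2 / (2 * σ) by ring] at this
  have h0 : (0:ℝ) ≤ t ^ 2 / (2 * σ) := by positivity
  calc t ^ 2 / (2 * σ) * Real.exp (-t ^ 2 / (2 * σ))
      ≤ t ^ 2 / (2 * σ) * (1 + t ^ 2 / (2 * σ))⁻¹ := mul_le_mul_of_nonneg_left h1 h0
    _ ≤ 1 := by
        rw [mul_inv_le_iff₀' (by positivity)]; linarith

lemma hasDerivAt_gpdf_mu (y σ : ℝ) (hσ : 0 < σ) (μ : ℝ) :
    HasDerivAt (fun m => gpdf y m σ)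
      ((Real.sqrt (2 * Real.pi * σ))⁻¹ *
        (Real.exp (-(y - μ) ^ 2 / (2 * σ)) * ((y - μ) / σ))) μ := by
  have h1 : HasDerivAt (fun m : ℝ => y - m) (-1) μ := (hasDerivAt_id μ).const_sub y
  have h2 : HasDerivAt (fun m : ℝ => -(y - m) ^ 2 / (2 * σ))
      ((y - μ) / σ) μ := by
    have := ((h1.pow 2).neg).div_const (2 * σ)
    refine this.congr_deriv ?_
    field_simp
    ring
  simpa [gpdf, mul_comm, mul_assoc, mul_left_comm] using
    h2.exp.const_mul (Real.sqrt (2 * Real.pi * σ))⁻¹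

lemma lip_mu {ℓ σ : ℝ} (hℓ : 0 < ℓ) (hσ : ℓ ≤ σ) (y μ μ' : ℝ) :
    |gpdf y μ σ - gpdf y μ' σ| ≤
      ((Real.sqrt (2 * Real.pi * ℓ))⁻¹ * (Real.sqrt (2 * ℓ))⁻¹) * |μ - μ'| := by
  have hσ0 : 0 < σ := lt_of_lt_of_le hℓ hσ
  have key := Convex.norm_image_sub_le_of_norm_deriv_le
    (f := fun m => gpdf y m σ) (s := Set.univ)
    (fun m _ => (hasDerivAt_gpdf_mu y σ hσ0 m).differentiableAt)
    (fun m _ => by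
      rw [(hasDerivAt_gpdf_mu y σ hσ0 m).deriv]
      have e1 : ‖(Real.sqrt (2 * Real.pi * σ))⁻¹ *
          (Real.exp (-(y - m) ^ 2 / (2 * σ)) * ((y - m) / σ))‖
          = (Real.sqrt (2 * Real.pi * σ))⁻¹ *
            (|y - m| / σ * Real.exp (-(y - m) ^ 2 / (2 * σ))) := by
        rw [Real.norm_eq_abs, abs_mul, abs_mul, abs_div,
          abs_of_nonneg (by positivity : (0:ℝ) ≤ (Real.sqrt (2 * Real.pi * σ))⁻¹),
          abs_of_nonneg (Real.exp_nonneg _), abs_of_nonneg hσ0.le]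
        ring
      rw [e1]
      have h2 : |y - m| / σ * Real.exp (-(y - m) ^ 2 / (2 * σ)) ≤ (Real.sqrt (2 * ℓ))⁻¹ :=
        le_trans (key_mu hσ0) (inv_sqrt_mono (by linarith) (by linarith))
      have h3 : (Real.sqrt (2 * Real.pi * σ))⁻¹ ≤ (Real.sqrt (2 * Real.pi * ℓ))⁻¹ :=
        inv_sqrt_mono (by positivity) (by nlinarith [Real.pi_pos])
      exact mul_le_mul h3 h2 (by positivity) (by positivity))
    convex_univ (Set.mem_univ μ') (Set.mem_univ μ)
  simpa [Real.norm_eq_abs] using key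

lemma hasDerivAt_gpdf_sigma (y μ σ : ℝ) (hσ : 0 < σ) :
    HasDerivAt (fun s => gpdf y μ s)
      ((Real.sqrt (2 * Real.pi * σ))⁻¹ * Real.exp (-(y - μ) ^ 2 / (2 * σ)) *
        ((y - μ) ^ 2 / (2 * σ ^ 2) - 1 / (2 * σ))) σ := by
  have hpi := Real.pi_pos
  have h2πσ : (0:ℝ) < 2 * Real.pi * σ := by positivity
  have hsq : Real.sqrt (2 * Real.pi * σ) ^ 2 = 2 * Real.pi * σ := Real.sq_sqrt h2πσ.le
  have hsqpos : 0 < Real.sqrt (2 * Real.pi * σ) := Real.sqrt_pos.2 h2πσ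
  have s1 : HasDerivAt (fun s : ℝ => 2 * Real.pi * s) (2 * Real.pi) σ := by
    simpa using (hasDerivAt_id σ).const_mul (2 * Real.pi)
  have s2 : HasDerivAt (fun s : ℝ => Real.sqrt (2 * Real.pi * s))
      (1 / (2 * Real.sqrt (2 * Real.pi * σ)) * (2 * Real.pi)) σ :=
    (Real.hasDerivAt_sqrt h2πσ.ne').comp σ s1
  have s3 := s2.inv hsqpos.ne'
  have e1 : HasDerivAt (fun s : ℝ => 2 * s) 2 σ := by
    simpa using (hasDerivAt_id σ).const_mul 2
  have e2 : HasDerivAt (fun s : ℝ => -(y - μ) ^ 2 / (2 * s))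
      ((0 * (2 * σ) - -(y - μ) ^ 2 * 2) / (2 * σ) ^ 2) σ :=
    (hasDerivAt_const σ (-(y - μ) ^ 2)).div e1 (by positivity)
  have total := s3.mul e2.exp
  refine total.congr_deriv ?_
  rw [hsq]
  simp only [Pi.inv_apply]
  field_simp
  ring_nf

lemma deriv_sigma_bound {ℓ u s : ℝ} (hℓ : 0 < ℓ) (hs : s ∈ Set.Icc ℓ u) (t : ℝ) :
    (Real.sqrt (2 * Real.pi * s))⁻¹ * Real.exp (-t ^ 2 / (2 * s)) *
      |t ^ 2 / (2 * s ^ 2) - 1 / (2 * s)|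
      ≤ (Real.sqrt (2 * Real.pi * ℓ))⁻¹ * (3 / (2 * ℓ)) := by
  obtain ⟨hls, hsu⟩ := hs
  have hs0 : 0 < s := lt_of_lt_of_le hℓ hls
  set e := Real.exp (-t ^ 2 / (2 * s)) with he
  have he0 : 0 < e := Real.exp_pos _
  have he1 : e ≤ 1 := by
    apply Real.exp_le_one_iff.2
    apply div_nonpos_of_nonpos_of_nonneg (by simp [sq_nonneg]) (by linarith)
  have habs : |t ^ 2 / (2 * s ^ 2) - 1 / (2 * s)| ≤ t ^ 2 / (2 * s ^ 2) + 1 / (2 * s) := by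
    calc |t ^ 2 / (2 * s ^ 2) - 1 / (2 * s)| ≤ |t ^ 2 / (2 * s ^ 2)| + |1 / (2 * s)| :=
          abs_sub _ _
      _ = t ^ 2 / (2 * s ^ 2) + 1 / (2 * s) := by
          rw [abs_of_nonneg (by positivity), abs_of_nonneg (by positivity)]
  have hkey : t ^ 2 / (2 * s) * e ≤ 1 := key_sigma hs0
  have hmain : e * (t ^ 2 / (2 * s ^ 2) + 1 / (2 * s)) ≤ 3 / (2 * ℓ) := by
    have h1 : e * (t ^ 2 / (2 * s ^ 2)) = (t ^ 2 / (2 * s) * e) * (1 / s) := by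
      field_simp
    have h2 : (t ^ 2 / (2 * s) * e) * (1 / s) ≤ 1 * (1 / s) :=
      mul_le_mul_of_nonneg_right hkey (by positivity)
    have h3 : e * (1 / (2 * s)) ≤ 1 / (2 * s) := by
      nlinarith [one_div_pos.2 (by positivity : (0:ℝ) < 2 * s)]
    have h4 : 1 / s ≤ 1 / ℓ := one_div_le_one_div_of_le hℓ hls
    have h5 : 1 / (2 * s) ≤ 1 / (2 * ℓ) := one_div_le_one_div_of_le (by positivity) (by linarith)
    have hsplit : e * (t ^ 2 / (2 * s ^ 2) + 1 / (2 * s)) =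
        e * (t ^ 2 / (2 * s ^ 2)) + e * (1 / (2 * s)) := by ring
    rw [hsplit, h1]
    calc (t ^ 2 / (2 * s) * e) * (1 / s) + e * (1 / (2 * s))
        ≤ 1 * (1 / s) + 1 / (2 * s) := by linarith
      _ ≤ 1 / ℓ + 1 / (2 * ℓ) := by linarith
      _ = 3 / (2 * ℓ) := by field_simp; ring
  have hc : (Real.sqrt (2 * Real.pi * s))⁻¹ ≤ (Real.sqrt (2 * Real.pi * ℓ))⁻¹ :=
    inv_sqrt_mono (by positivity) (by nlinarith [Real.pi_pos])
  calc (Real.sqrt (2 * Real.pi * s))⁻¹ * e * |t ^ 2 / (2 * s ^ 2) - 1 / (2 * s)|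
      ≤ (Real.sqrt (2 * Real.pi * s))⁻¹ * (e * (t ^ 2 / (2 * s ^ 2) + 1 / (2 * s))) := by
        rw [mul_assoc]
        exact mul_le_mul_of_nonneg_left (mul_le_mul_of_nonneg_left habs he0.le) (by positivity)
    _ ≤ (Real.sqrt (2 * Real.pi * ℓ))⁻¹ * (3 / (2 * ℓ)) :=
        mul_le_mul hc hmain (by positivity) (by positivity)

lemma lip_sigma {ℓ u σ σ' : ℝ} (hℓ : 0 < ℓ) (hσ : σ ∈ Set.Icc ℓ u) (hσ' : σ' ∈ Set.Icc ℓ u)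
    (y μ : ℝ) :
    |gpdf y μ σ - gpdf y μ σ'| ≤
      ((Real.sqrt (2 * Real.pi * ℓ))⁻¹ * (3 / (2 * ℓ))) * |σ - σ'| := by
  have key := Convex.norm_image_sub_le_of_norm_deriv_le
    (f := fun s => gpdf y μ s) (s := Set.Icc ℓ u)
    (fun s hs => (hasDerivAt_gpdf_sigma y μ s (lt_of_lt_of_le hℓ hs.1)).differentiableAt)
    (fun s hs => by
      rw [(hasDerivAt_gpdf_sigma y μ s (lt_of_lt_of_le hℓ hs.1)).deriv]
      have hs0 : 0 < s := lt_of_lt_of_le hℓ hs.1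
      rw [Real.norm_eq_abs, abs_mul, abs_mul,
        abs_of_nonneg (by positivity : (0:ℝ) ≤ (Real.sqrt (2 * Real.pi * s))⁻¹),
        abs_of_nonneg (Real.exp_nonneg _)]
      exact deriv_sigma_bound hℓ hs (y - μ))
    (convex_Icc ℓ u) hσ' hσ
  simpa [Real.norm_eq_abs] using key

lemma grid_cover {δ : ℝ} (S : ℝ) (hδ : 0 < δ) (lo c : ℝ) (h1 : lo ≤ c) (h2 : c ≤ lo + S) :
    ∃ j : Fin (⌈S / δ⌉₊ + 1), |c - (lo + (j : ℝ) * δ)| ≤ δ := by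
  have hr : 0 ≤ c - lo := by linarith
  have hj : ⌊(c - lo) / δ⌋₊ < ⌈S / δ⌉₊ + 1 := by
    have h : ⌊(c - lo) / δ⌋₊ ≤ ⌊S / δ⌋₊ :=
      Nat.floor_mono (by apply div_le_div_of_nonneg_right _ hδ.le; linarith)
    exact lt_of_le_of_lt (le_trans h (Nat.floor_le_ceil _)) (Nat.lt_succ_self _)
  refine ⟨⟨⌊(c - lo) / δ⌋₊, hj⟩, ?_⟩
  have hle : (⌊(c - lo) / δ⌋₊ : ℝ) * δ ≤ c - lo := by
    rw [← le_div_iff₀ hδ]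
    exact Nat.floor_le (by positivity)
  have hlt : c - lo < ((⌊(c - lo) / δ⌋₊ : ℝ) + 1) * δ := by
    rw [← div_lt_iff₀ hδ]
    exact Nat.lt_floor_add_one _
  rw [abs_le]
  constructor <;> simp only [Fin.val_mk] <;> nlinarith

lemma grid_cover' {δ : ℝ} (S : ℝ) (hδ : 0 < δ) {n : ℕ} (hn : ⌈S / δ⌉₊ + 1 ≤ n)
    (lo c : ℝ) (h1 : lo ≤ c) (h2 : c ≤ lo + S) :
    ∃ j : Fin n, |c - (lo + (j : ℝ) * δ)| ≤ δ := by
  obtain ⟨j, hj⟩ := grid_cover S hδ lo c h1 h2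
  exact ⟨⟨j.val, lt_of_lt_of_le j.isLt hn⟩, hj⟩

lemma pad {d k : ℕ} {Θ : Set ((Fin d → ℝ) × ℝ × ℝ)} {g : (Fin d → ℝ) × ℝ → ℝ}
    (hg : memMixClass d k Θ g) {θ₀ : (Fin d → ℝ) × ℝ × ℝ} (hθ₀ : θ₀ ∈ Θ) :
    ∃ (p : Fin k → ℝ) (θ : Fin k → (Fin d → ℝ) × ℝ × ℝ),
      (∀ i, 0 ≤ p i) ∧ (∀ i, p i ≤ 1) ∧ (∀ i, θ i ∈ Θ) ∧
      g = fun z => ∑ i, p i * gpdf z.2 (∑ t, (θ i).1 t * z.1 t + (θ i).2.1) (θ i).2.2 := by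
  obtain ⟨k', hk', p, θ, hp0, hps, hθ, hgeq⟩ := hg
  refine ⟨fun i => if h : (i : ℕ) < k' then p ⟨i, h⟩ else 0,
    fun i => if h : (i : ℕ) < k' then θ ⟨i, h⟩ else θ₀, ?_, ?_, ?_, ?_⟩
  · intro i; dsimp only; split_ifs with h
    · exact hp0 _
    · exact le_refl 0
  · intro i; dsimp only; split_ifs with h
    · rw [← hps]
      exact Finset.single_le_sum (fun j _ => hp0 j) (Finset.mem_univ _)
    · exact zero_le_one
  · intro i; dsimp only; split_ifs with h
    · exact hθ _
    · exact hθ₀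
  · funext z
    rw [hgeq]
    dsimp only
    set G : ℕ → ℝ := fun n => if h : n < k' then
      p ⟨n, h⟩ * gpdf z.2 (∑ t, (θ ⟨n, h⟩).1 t * z.1 t + (θ ⟨n, h⟩).2.1) (θ ⟨n, h⟩).2.2
      else 0 with hG
    have lhs : ∑ i : Fin k', p i * gpdf z.2 (∑ t, (θ i).1 t * z.1 t + (θ i).2.1) (θ i).2.2
        = ∑ n ∈ Finset.range k', G n := by
      rw [← Fin.sum_univ_eq_sum_range]
      exact Finset.sum_congr rfl (fun i _ => by simp [hG, i.isLt])
    have rhs : ∑ i : Fin k, (if h : (i : ℕ) < k' then p ⟨i, h⟩ else 0) *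
        gpdf z.2 (∑ t, ((if h : (i : ℕ) < k' then θ ⟨i, h⟩ else θ₀)).1 t * z.1 t +
          ((if h : (i : ℕ) < k' then θ ⟨i, h⟩ else θ₀)).2.1)
          ((if h : (i : ℕ) < k' then θ ⟨i, h⟩ else θ₀)).2.2
        = ∑ n ∈ Finset.range k, G n := by
      rw [← Fin.sum_univ_eq_sum_range]
      refine Finset.sum_congr rfl (fun i _ => ?_)
      by_cases h : (i : ℕ) < k' <;> simp [hG, h]
    rw [lhs, rhs]
    apply Finset.sum_subset (Finset.range_subset_range.2 hk')
    intro n _ hn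
    simp only [Finset.mem_range, not_lt] at hn
    simp [hG, Nat.not_lt.2 hn]

lemma card_index (k d n : ℕ) :
    Fintype.card (Fin k → Fin n × (Fin d → Fin n) × Fin n × Fin n) = n ^ ((d + 3) * k) := by
  simp [Fintype.card_fun, Fintype.card_prod, Fintype.card_fin]
  ring

lemma memMixClass_elim {d k : ℕ} {Θ : Set ((Fin d → ℝ) × ℝ × ℝ)} {g : (Fin d → ℝ) × ℝ → ℝ}
    (hg : memMixClass d k Θ g) : Θ.Nonempty ∧ 0 < k := by
  obtain ⟨k', hk', p, θ, hp0, hps, hθm, -⟩ := hg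
  have hk0 : 0 < k' := by
    rcases Nat.eq_zero_or_pos k' with h | h
    · subst h; simp at hps
    · exact h
  exact ⟨⟨θ ⟨0, hk0⟩, hθm _⟩, lt_of_lt_of_le hk0 hk'⟩

set_option maxHeartbeats 2000000 in
/-- Metric entropy bound for the class of Gaussian mixtures of experts with
compact parameter set and bounded covariate domain:
`log N(ε, 𝒫_k(Θ), ‖·‖_∞) ≲ log(1/ε)` for `0 < ε < 1/2`. -/
theorem log_covering_number_mixture_class
    (d k : ℕ) (ℓ u : ℝ) (hℓ : 0 < ℓ) (hℓu : ℓ ≤ u)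
    (Θ : Set ((Fin d → ℝ) × ℝ × ℝ)) (hΘ : IsCompact Θ)
    (hΘσ : ∀ θ ∈ Θ, θ.2.2 ∈ Set.Icc ℓ u)
    (X : Set (Fin d → ℝ)) (hX : Bornology.IsBounded X) :
    ∃ C > 0, ∀ ε : ℝ, 0 < ε → ε < 1 / 2 →
      ∃ (N : ℕ) (c : Fin N → ((Fin d → ℝ) × ℝ → ℝ)),
        (∀ g, memMixClass d k Θ g →
          ∃ j, ∀ x ∈ X, ∀ y : ℝ, |g (x, y) - c j (x, y)| ≤ ε) ∧
        Real.log N ≤ C * Real.log (1 / ε) := by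
  by_cases hcase : Θ.Nonempty ∧ 0 < k
  swap
  · refine ⟨1, one_pos, fun ε hε hε2 => ⟨1, fun _ => 0, ?_, ?_⟩⟩
    · exact fun g hg => absurd (memMixClass_elim hg) hcase
    · simp only [Nat.cast_one, Real.log_one, one_mul]
      exact Real.log_nonneg (by rw [le_div_iff₀ hε]; linarith)
  obtain ⟨⟨θ₀, hθ₀⟩, hk⟩ := hcase
  -- bounds on the parameter set and covariate domain
  obtain ⟨R, hR0, hRb⟩ : ∃ R : ℝ, 0 ≤ R ∧ ∀ θ' ∈ Θ, ‖θ'‖ ≤ R := by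
    obtain ⟨R₀, hR₀⟩ := isBounded_iff_forall_norm_le.mp hΘ.isBounded
    exact ⟨max R₀ 0, le_max_right _ _, fun θ' h => (hR₀ θ' h).trans (le_max_left _ _)⟩
  obtain ⟨M, hM0, hMb⟩ : ∃ M : ℝ, 0 ≤ M ∧ ∀ x ∈ X, ‖x‖ ≤ M := by
    obtain ⟨M₀, hM₀⟩ := isBounded_iff_forall_norm_le.mp hX
    exact ⟨max M₀ 0, le_max_right _ _, fun x h => (hM₀ x h).trans (le_max_left _ _)⟩
  have ha_bd : ∀ θ' ∈ Θ, ∀ t, |θ'.1 t| ≤ R := fun θ' h t =>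
    le_trans (le_trans (norm_le_pi_norm θ'.1 t) (norm_fst_le θ')) (hRb θ' h)
  have hb_bd : ∀ θ' ∈ Θ, |θ'.2.1| ≤ R := fun θ' h =>
    le_trans (le_trans (norm_fst_le θ'.2) (norm_snd_le θ')) (hRb θ' h)
  -- constants
  obtain ⟨B0, hB0def⟩ : ∃ B0 : ℝ, B0 = (Real.sqrt (2 * Real.pi * ℓ))⁻¹ := ⟨_, rfl⟩
  obtain ⟨L1, hL1def⟩ : ∃ L1 : ℝ, L1 = B0 * (Real.sqrt (2 * ℓ))⁻¹ := ⟨_, rfl⟩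
  obtain ⟨L2, hL2def⟩ : ∃ L2 : ℝ, L2 = B0 * (3 / (2 * ℓ)) := ⟨_, rfl⟩
  obtain ⟨K0, hK0def⟩ : ∃ K0 : ℝ, K0 = B0 + 2 * (L1 * (M * d + 1) + L2) := ⟨_, rfl⟩
  obtain ⟨D, hDdef⟩ : ∃ D : ℝ, D = k * K0 + 1 := ⟨_, rfl⟩
  obtain ⟨S, hSdef⟩ : ∃ S : ℝ, S = 2 * R + u + 1 := ⟨_, rfl⟩
  obtain ⟨A, hAdef⟩ : ∃ A : ℝ, A = S * D + 2 := ⟨_, rfl⟩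
  have hB0pos : 0 < B0 := by rw [hB0def]; positivity
  have hL1pos : 0 < L1 := by rw [hL1def]; positivity
  have hL2pos : 0 < L2 := by rw [hL2def]; positivity
  have hK0pos : 0 < K0 := by rw [hK0def]; positivity
  have hD1 : 1 ≤ D := by
    rw [hDdef]; nlinarith [Nat.cast_nonneg (α := ℝ) k]
  have hDpos : 0 < D := lt_of_lt_of_le one_pos hD1
  have hS1 : 1 ≤ S := by rw [hSdef]; linarith
  have hA1 : 1 ≤ A := by rw [hAdef]; nlinarith
  have hlog2pos : (0:ℝ) < Real.log 2 := Real.log_pos one_lt_two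
  have hlogA : 0 ≤ Real.log A := Real.log_nonneg hA1
  obtain ⟨C, hCdef⟩ : ∃ C : ℝ, C = (k * (d + 3) : ℝ) * (Real.log A / Real.log 2 + 1) + 1 := ⟨_, rfl⟩
  have hCpos : 0 < C := by
    rw [hCdef]
    have h1 : (0:ℝ) ≤ (k * (d + 3) : ℝ) := by positivity
    have h2 : (0:ℝ) ≤ Real.log A / Real.log 2 + 1 := by positivity
    nlinarith
  refine ⟨C, hCpos, fun ε hε hε2 => ?_⟩
  obtain ⟨δ, hδdef⟩ : ∃ δ : ℝ, δ = ε / D := ⟨_, rfl⟩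
  have hδpos : 0 < δ := by rw [hδdef]; positivity
  have hδε : δ ≤ ε := by
    rw [hδdef, div_le_iff₀ hDpos]; nlinarith
  have hδ1 : δ ≤ 1 := by linarith
  obtain ⟨n, hndef⟩ : ∃ n : ℕ, n = ⌈S / δ⌉₊ + 1 := ⟨_, rfl⟩
  have hnge : ⌈S / δ⌉₊ + 1 ≤ n := hndef.ge
  refine ⟨Fintype.card (Fin k → Fin n × (Fin d → Fin n) × Fin n × Fin n),
    fun j => (fun w : Fin k → Fin n × (Fin d → Fin n) × Fin n × Fin n =>
      (fun z : (Fin d → ℝ) × ℝ => ∑ i, ((w i).1 : ℝ) * δ *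
        gpdf z.2 (∑ t, (-R + ((w i).2.1 t : ℝ) * δ) * z.1 t + (-R + ((w i).2.2.1 : ℝ) * δ))
          (min u (ℓ + ((w i).2.2.2 : ℝ) * δ))))
      ((Fintype.equivFin (Fin k → Fin n × (Fin d → Fin n) × Fin n × Fin n)).symm j), ?_, ?_⟩
  · -- covering property
    intro g hg
    obtain ⟨p, θ, hp0, hp1, hθΘ, hgeq⟩ := pad hg hθ₀
    have hex : ∀ i : Fin k, ∃ w : Fin n × (Fin d → Fin n) × Fin n × Fin n,
        |p i - (w.1 : ℝ) * δ| ≤ δ ∧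
        (∀ t, |(θ i).1 t - (-R + (w.2.1 t : ℝ) * δ)| ≤ δ) ∧
        |(θ i).2.1 - (-R + (w.2.2.1 : ℝ) * δ)| ≤ δ ∧
        |(θ i).2.2 - min u (ℓ + (w.2.2.2 : ℝ) * δ)| ≤ δ := by
      intro i
      obtain ⟨jp, hjp⟩ := grid_cover' S hδpos hnge 0 (p i) (hp0 i) (by linarith [hp1 i])
      have hja : ∀ t : Fin d, ∃ j : Fin n, |(θ i).1 t - (-R + (j : ℝ) * δ)| ≤ δ := fun t =>
        grid_cover' S hδpos hnge (-R) ((θ i).1 t)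
          (by linarith [(abs_le.1 (ha_bd _ (hθΘ i) t)).1])
          (by linarith [(abs_le.1 (ha_bd _ (hθΘ i) t)).2])
      choose ja hja using hja
      obtain ⟨jb, hjb⟩ := grid_cover' S hδpos hnge (-R) ((θ i).2.1)
        (by linarith [(abs_le.1 (hb_bd _ (hθΘ i))).1])
        (by linarith [(abs_le.1 (hb_bd _ (hθΘ i))).2])
      obtain ⟨hσl, hσu⟩ := hΘσ _ (hθΘ i)
      obtain ⟨js, hjs⟩ := grid_cover' S hδpos hnge ℓ ((θ i).2.2) hσl (by linarith)
      refine ⟨⟨jp, ja, jb, js⟩, by simpa using hjp, hja, hjb, ?_⟩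
      dsimp only
      rcases le_total (ℓ + (js : ℝ) * δ) u with h | h
      · rw [min_eq_right h]; exact hjs
      · rw [min_eq_left h]
        have := abs_le.1 hjs
        rw [abs_le]
        constructor <;> linarith
    choose w hw1 hw2 hw3 hw4 using hex
    refine ⟨Fintype.equivFin _ w, ?_⟩
    intro x hx y
    dsimp only
    rw [Equiv.symm_apply_apply, hgeq]
    dsimp only
    have hxt : ∀ t, |x t| ≤ M := fun t => le_trans (norm_le_pi_norm x t) (hMb x hx)
    have per_i : ∀ i : Fin k,
        |p i * gpdf y (∑ t, (θ i).1 t * x t + (θ i).2.1) (θ i).2.2 -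
          ((w i).1 : ℝ) * δ *
            gpdf y (∑ t, (-R + ((w i).2.1 t : ℝ) * δ) * x t + (-R + ((w i).2.2.1 : ℝ) * δ))
              (min u (ℓ + ((w i).2.2.2 : ℝ) * δ))| ≤ δ * K0 := by
      intro i
      obtain ⟨hσl, hσu⟩ := hΘσ _ (hθΘ i)
      set m1 : ℝ := ∑ t, (θ i).1 t * x t + (θ i).2.1 with hm1
      set m2 : ℝ := ∑ t, (-R + ((w i).2.1 t : ℝ) * δ) * x t + (-R + ((w i).2.2.1 : ℝ) * δ)
        with hm2
      set s2 : ℝ := min u (ℓ + ((w i).2.2.2 : ℝ) * δ) with hs2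
      set P : ℝ := ((w i).1 : ℝ) * δ with hP
      set G : ℝ := gpdf y m1 (θ i).2.2 with hGdef
      set G' : ℝ := gpdf y m2 s2 with hG'def
      clear_value P G G' s2 m2 m1
      have hs2mem : s2 ∈ Set.Icc ℓ u := by
        rw [hs2]
        exact ⟨le_min hℓu (le_add_of_nonneg_right (by positivity)), min_le_left _ _⟩
      have hG0 : 0 ≤ G := by rw [hGdef]; exact gpdf_nonneg _ _ _
      have hGB : G ≤ B0 := by rw [hGdef, hB0def]; exact gpdf_le hℓ hσl _ _
      have hP0 : 0 ≤ P := by rw [hP]; positivity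
      have hw1' : |p i - P| ≤ δ := by rw [hP]; exact hw1 i
      have hP2 : P ≤ 2 := by
        linarith [(abs_le.1 hw1').1, hp1 i, hδ1]
      -- mean difference
      have hmean : |m1 - m2| ≤ M * d * δ + δ := by
        have hsum : m1 - m2 = (∑ t, ((θ i).1 t - (-R + ((w i).2.1 t : ℝ) * δ)) * x t) +
            ((θ i).2.1 - (-R + ((w i).2.2.1 : ℝ) * δ)) := by
          rw [hm1, hm2,
            show (∑ t, ((θ i).1 t - (-R + ((w i).2.1 t : ℝ) * δ)) * x t) =
              (∑ t, (θ i).1 t * x t) - (∑ t, (-R + ((w i).2.1 t : ℝ) * δ) * x t) from by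
                rw [← Finset.sum_sub_distrib]
                exact Finset.sum_congr rfl (fun t _ => by ring)]
          ring
        rw [hsum]
        refine le_trans (abs_add_le _ _) ?_
        have h1 : |∑ t, ((θ i).1 t - (-R + ((w i).2.1 t : ℝ) * δ)) * x t| ≤ M * d * δ := by
          refine le_trans (Finset.abs_sum_le_sum_abs _ _) ?_
          have hterm : ∀ t ∈ Finset.univ, |((θ i).1 t - (-R + ((w i).2.1 t : ℝ) * δ)) * x t|
              ≤ δ * M := by
            intro t _
            rw [abs_mul]
            exact mul_le_mul (hw2 i t) (hxt t) (abs_nonneg _) hδpos.le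
          refine le_trans (Finset.sum_le_sum hterm) ?_
          rw [Finset.sum_const, Finset.card_univ, Fintype.card_fin, nsmul_eq_mul]
          exact le_of_eq (by ring)
        linarith [hw3 i, h1]
      have hGG' : |G - G'| ≤ L1 * (M * d * δ + δ) + L2 * δ := by
        have step1 : |gpdf y m1 (θ i).2.2 - gpdf y m2 (θ i).2.2| ≤ L1 * |m1 - m2| := by
          rw [hL1def, hB0def]; exact lip_mu hℓ hσl y m1 m2
        have step2 : |gpdf y m2 (θ i).2.2 - gpdf y m2 s2| ≤ L2 * |(θ i).2.2 - s2| := by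
          rw [hL2def, hB0def]; exact lip_sigma hℓ ⟨hσl, hσu⟩ hs2mem y m2
        have tri : |G - G'| ≤ |gpdf y m1 (θ i).2.2 - gpdf y m2 (θ i).2.2| +
            |gpdf y m2 (θ i).2.2 - gpdf y m2 s2| := by
          rw [hGdef, hG'def]
          exact abs_sub_le _ _ _
        have e1 : L1 * |m1 - m2| ≤ L1 * (M * d * δ + δ) :=
          mul_le_mul_of_nonneg_left hmean hL1pos.le
        have e2 : L2 * |(θ i).2.2 - s2| ≤ L2 * δ :=
          mul_le_mul_of_nonneg_left (by rw [hs2]; exact hw4 i) hL2pos.le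
        linarith
      have habs : |p i * G - P * G'| ≤ |p i - P| * G + P * |G - G'| := by
        have hid : p i * G - P * G' = (p i - P) * G + P * (G - G') := by ring
        rw [hid]
        refine le_trans (abs_add_le _ _) ?_
        rw [abs_mul, abs_mul, abs_of_nonneg hG0, abs_of_nonneg hP0]
      have h1 : |p i - P| * G ≤ δ * B0 :=
        mul_le_mul hw1' hGB hG0 hδpos.le
      have h2 : P * |G - G'| ≤ 2 * (L1 * (M * d * δ + δ) + L2 * δ) :=
        mul_le_mul hP2 hGG' (abs_nonneg _) (by norm_num)
      have : δ * K0 = δ * B0 + 2 * (L1 * (M * d * δ + δ) + L2 * δ) := by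
        rw [hK0def]; ring
      linarith
    calc |∑ i : Fin k, p i * gpdf y (∑ t, (θ i).1 t * x t + (θ i).2.1) (θ i).2.2 -
          ∑ i : Fin k, ((w i).1 : ℝ) * δ *
            gpdf y (∑ t, (-R + ((w i).2.1 t : ℝ) * δ) * x t + (-R + ((w i).2.2.1 : ℝ) * δ))
              (min u (ℓ + ((w i).2.2.2 : ℝ) * δ))|
        = |∑ i : Fin k, (p i * gpdf y (∑ t, (θ i).1 t * x t + (θ i).2.1) (θ i).2.2 -
            ((w i).1 : ℝ) * δ *
            gpdf y (∑ t, (-R + ((w i).2.1 t : ℝ) * δ) * x t + (-R + ((w i).2.2.1 : ℝ) * δ))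
              (min u (ℓ + ((w i).2.2.2 : ℝ) * δ)))| := by
          rw [Finset.sum_sub_distrib]
      _ ≤ ∑ i : Fin k, |p i * gpdf y (∑ t, (θ i).1 t * x t + (θ i).2.1) (θ i).2.2 -
            ((w i).1 : ℝ) * δ *
            gpdf y (∑ t, (-R + ((w i).2.1 t : ℝ) * δ) * x t + (-R + ((w i).2.2.1 : ℝ) * δ))
              (min u (ℓ + ((w i).2.2.2 : ℝ) * δ))| := Finset.abs_sum_le_sum_abs _ _
      _ ≤ ∑ _i : Fin k, δ * K0 := Finset.sum_le_sum (fun i _ => per_i i)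
      _ = k * (δ * K0) := by
          rw [Finset.sum_const, Finset.card_univ, Fintype.card_fin, nsmul_eq_mul]
      _ ≤ ε := by
          rw [hδdef]
          rw [show (k : ℝ) * (ε / D * K0) = ε * ((k * K0) / D) by ring]
          have hfrac : (k : ℝ) * K0 / D ≤ 1 := by
            rw [div_le_one hDpos, hDdef]; linarith
          calc ε * ((k : ℝ) * K0 / D) ≤ ε * 1 := mul_le_mul_of_nonneg_left hfrac hε.le
            _ = ε := mul_one ε
  · -- counting
    rw [card_index k d n]
    have hn1 : 1 ≤ n := hndef ▸ Nat.le_add_left 1 _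
    have hnA : (n : ℝ) ≤ A / ε := by
      have hceil : (⌈S / δ⌉₊ : ℝ) < S / δ + 1 := Nat.ceil_lt_add_one (by positivity)
      -- note: keep hSδ as a linear fact
      have hSδ : S / δ = S * D / ε := by
        rw [hδdef, div_div_eq_mul_div]
      have h2ε : 2 ≤ 2 / ε := by
        rw [le_div_iff₀ hε]; linarith
      have hsplit : A / ε = S * D / ε + 2 / ε := by
        rw [hAdef]; ring
      have : (n : ℝ) = (⌈S / δ⌉₊ : ℝ) + 1 := by rw [hndef]; push_cast; ring
      rw [this, hsplit]
      linarith [hSδ, hceil]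
    have hlogn : Real.log n ≤ Real.log A + Real.log (1 / ε) := by
      have h1 : Real.log n ≤ Real.log (A / ε) :=
        Real.log_le_log (by exact_mod_cast Nat.lt_of_lt_of_le Nat.zero_lt_one hn1) hnA
      have h2 : Real.log (A / ε) = Real.log A + Real.log (1 / ε) := by
        rw [Real.log_div (by linarith) hε.ne', Real.log_div one_ne_zero hε.ne',
          Real.log_one]
        ring
      linarith
    have hlogε2 : Real.log 2 ≤ Real.log (1 / ε) := by
      apply Real.log_le_log two_pos
      rw [le_div_iff₀ hε]; linarith
    have hlogεpos : 0 < Real.log (1 / ε) := lt_of_lt_of_le hlog2pos hlogε2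
    have hlogn0 : 0 ≤ Real.log n := Real.log_nonneg (by exact_mod_cast hn1)
    push_cast [Real.log_pow]
    have hAbound : Real.log A ≤ Real.log A / Real.log 2 * Real.log (1 / ε) := by
      rw [div_mul_eq_mul_div, le_div_iff₀ hlog2pos]
      exact mul_le_mul_of_nonneg_left hlogε2 hlogA
    have hkd : (0:ℝ) ≤ (d + 3 : ℝ) * k := by positivity
    calc ((d : ℝ) + 3) * k * Real.log n
        ≤ ((d : ℝ) + 3) * k * (Real.log A + Real.log (1 / ε)) :=
          mul_le_mul_of_nonneg_left hlogn hkd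
      _ ≤ ((d : ℝ) + 3) * k * ((Real.log A / Real.log 2) * Real.log (1 / ε)
            + Real.log (1 / ε)) := by
          apply mul_le_mul_of_nonneg_left _ hkd
          linarith
      _ = ((k : ℝ) * (d + 3)) * (Real.log A / Real.log 2 + 1) * Real.log (1 / ε) := by ring
      _ ≤ C * Real.log (1 / ε) := by
          apply mul_le_mul_of_nonneg_right _ hlogεpos.le
          rw [hCdef]
          push_cast
          linarith
end
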